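/- arXiv:1909.01751 — 2 statements merged into one kernel-verified Lean document; each statement's English description precedes it below -/
import Mathlib

section
/- Let X be a finitely supported subset of an invariant set Y such that X contains no infinite uniformly supported subset. Then the uniform powerset ℘_us(X), consisting of all uniformly supported subsets of X, also contains no infinite uniformly supported subset. -/
/-!
Let `W ⊆ ℘_us(X)` be uniformly supported by a finite set `S`. Every `Z ∈ W` is a uniformly
supported subset of `X`, hence finite. Since `S` supports the finite set `Z`, each `x ∈ Z` has a
finite orbit under the permutations fixing `S`, and this forces `S` to support `x`: otherwise an
atom `a` of the least support of `x` outside `S` could be swapped with infinitely many fresh atoms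
`c`, and the elements `(a c) • x` are pairwise distinct because their least supports
`(a c) • supp x` are. Hence `⋃₀ W ⊆ X` is uniformly supported by `S`, so it is finite,
and `W` is a family of subsets of a finite set.
-/

open Pointwise

/-- The group of finitary permutations of the set `A` of atoms:
bijections of `A` that move only finitely many atoms. -/
def finPerm (A : Type*) : Subgroup (Equiv.Perm A) where
  carrier := {π | {a | π a ≠ a}.Finite}
  one_mem' := by simp
  mul_mem' := by
    intro π σ hπ hσ
    apply Set.Finite.subset (hπ.union hσ)
    intro a ha
    by_contra hc
    simp only [Set.mem_union, Set.mem_setOf_eq, not_or, not_not] at hc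
    exact ha (by simp [Equiv.Perm.mul_apply, hc.1, hc.2])
  inv_mem' := by
    intro π hπ
    apply Set.Finite.subset hπ
    intro a ha
    simp only [Set.mem_setOf_eq] at ha ⊢
    intro h
    exact ha (Equiv.Perm.inv_eq_iff_eq.mpr h.symm)

/-- `x` is finitely supported: some finite set of atoms supports it. -/
def FinitelySupported (A : Type*) {X : Type*} [MulAction (finPerm A) X] (x : X) : Prop :=
  ∃ S : Set A, S.Finite ∧ MulAction.Supports (finPerm A) S x

/-- A subset `Z` of an `S_A`-set is uniformly supported if a single finite set
of atoms supports every element of `Z`. -/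
def UniformlySupported (A : Type*) {X : Type*} [MulAction (finPerm A) X] (Z : Set X) : Prop :=
  ∃ S : Set A, S.Finite ∧ ∀ x ∈ Z, MulAction.Supports (finPerm A) S x

/-- The least support of `x`: the intersection of all finite sets of atoms supporting `x`. -/
noncomputable def supp (A : Type*) {X : Type*} [MulAction (finPerm A) X] (x : X) : Set A :=
  ⋂₀ {S : Set A | S.Finite ∧ MulAction.Supports (finPerm A) S x}

/-- `Z` contains no infinite uniformly supported subset
(`Z` is "FSM non-uniformly infinite"). -/
def NoInfUS (A : Type*) {X : Type*} [MulAction (finPerm A) X] (Z : Set X) : Prop :=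
  ∀ W ⊆ Z, UniformlySupported A W → W.Finite

/-- The uniform powerset `℘_us(X)`: all uniformly supported subsets of `X`. -/
def usPowerset (A : Type*) {X : Type*} [MulAction (finPerm A) X] (Z : Set X) : Set (Set X) :=
  {W | W ⊆ Z ∧ UniformlySupported A W}

/-- The finite powerset `℘_fin(X)`: all finite subsets of `X`. -/
def finPowerset {X : Type*} (Z : Set X) : Set (Set X) :=
  {W | W ⊆ Z ∧ W.Finite}

/-- `S` supports the function `f` on the domain `X` (Proposition 2.18'(2)):
for every `π` fixing `S` pointwise and every `x ∈ X`, `π • x ∈ X` and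
`f (π • x) = π • f x`. -/
def FnSupportsOn (A : Type*) {Y : Type*} [MulAction (finPerm A) Y]
    (X : Set Y) (S : Set A) (f : Y → Y) : Prop :=
  ∀ π : finPerm A, (∀ a ∈ S, π • a = a) → ∀ x ∈ X, π • x ∈ X ∧ f (π • x) = π • f x

/-- The least support of a function `f` with domain `X`. -/
noncomputable def fnSupp (A : Type*) {Y : Type*} [MulAction (finPerm A) Y]
    (X : Set Y) (f : Y → Y) : Set A :=
  ⋂₀ {S : Set A | S.Finite ∧ FnSupportsOn A X S f}

open MulAction Equiv

theorem MulAction.supports_smul_iff {G α β : Type*} [Group G] [MulAction G α] [MulAction G β]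
    {s : Set α} {b : β} (g : G) : Supports G (g • s) (g • b) ↔ Supports G s b := by
  suffices key : ∀ (g : G) {s : Set α} {b : β}, Supports G s b → Supports G (g • s) (g • b) by
    refine ⟨fun h => ?_, key g⟩
    simpa only [inv_smul_smul] using key g⁻¹ h
  intro g s b h g' hg'
  have hconj : (g⁻¹ * g' * g) • b = b := h _ fun a ha => by
    rw [mul_smul, mul_smul, hg' (Set.smul_mem_smul_set ha), inv_smul_smul]
  rwa [mul_smul, mul_smul, inv_smul_eq_iff] at hconj

theorem swap_mem_finPerm {A : Type*} [DecidableEq A] (a b : A) : swap a b ∈ finPerm A :=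
  ((Set.finite_singleton b).insert a).subset fun _ hc => by
    by_contra h
    simp only [Set.mem_insert_iff, Set.mem_singleton_iff, not_or] at h
    exact hc (swap_apply_of_ne_of_ne h.1 h.2)

namespace finPerm

variable {A Y : Type*} [MulAction (finPerm A) Y]

section Swap

variable [DecidableEq A]

def ofSwap (a b : A) : finPerm A := ⟨swap a b, swap_mem_finPerm a b⟩

/-- The stabilizer of `x`, moved into `Perm A` so that the results on subgroups generated by
transpositions apply to it. -/
def permStabilizer (x : Y) : Subgroup (Perm A) :=
  (stabilizer (finPerm A) x).map (finPerm A).subtype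

theorem swap_mem_permStabilizer_iff {x : Y} {a b : A} :
    swap a b ∈ permStabilizer x ↔ ofSwap a b • x = x := by
  simp only [permStabilizer, Subgroup.mem_map, mem_stabilizer_iff, Subgroup.coe_subtype]
  exact ⟨fun ⟨π, hπ, he⟩ => by rwa [show π = ofSwap a b from Subtype.ext he] at hπ,
    fun h => ⟨_, h, rfl⟩⟩

theorem ofSwap_smul_of_notMem {S : Set A} {a b c : A} (ha : a ∉ S) (hb : b ∉ S) (hc : c ∈ S) :
    ofSwap a b • c = c :=
  swap_apply_of_ne_of_ne (ne_of_mem_of_not_mem hc ha) (ne_of_mem_of_not_mem hc hb)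

theorem swap_mem_permStabilizer {S : Set A} {x : Y} (hS : Supports (finPerm A) S x)
    {a b : A} (ha : a ∉ S) (hb : b ∉ S) : swap a b ∈ permStabilizer x :=
  swap_mem_permStabilizer_iff.2 <| hS _ fun _ => ofSwap_smul_of_notMem ha hb

/-- A permutation fixing `S` pointwise moves each atom within `Sᶜ`, so being finitary it is a
product of transpositions of atoms outside `S`. -/
theorem supports_of_forall_swap_mem {S : Set A} {x : Y}
    (h : ∀ a ∉ S, ∀ b ∉ S, swap a b ∈ permStabilizer x) : Supports (finPerm A) S x := by
  intro π hπ
  have hπS : ∀ a ∈ S, (π : Perm A) a = a := fun a ha => hπ ha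
  set T : Set (Perm A) := {σ | ∃ a ∉ S, ∃ b ∉ S, a ≠ b ∧ σ = swap a b}
  have hT : ∀ σ ∈ T, σ.IsSwap := by
    rintro σ ⟨a, -, b, -, hab, rfl⟩
    exact ⟨a, b, hab, rfl⟩
  have hle : Subgroup.closure T ≤ permStabilizer x := by
    rw [Subgroup.closure_le]
    rintro σ ⟨a, ha, b, hb, -, rfl⟩
    exact h a ha b hb
  have hmem : (π : Perm A) ∈ Subgroup.closure T := by
    refine (mem_closure_isSwap hT).2 ⟨π.2, fun a => ?_⟩
    by_cases ha : a ∈ S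
    · rw [hπS a ha]; exact mem_orbit_self a
    by_cases hfix : (π : Perm A) a = a
    · rw [hfix]; exact mem_orbit_self a
    have hπa : (π : Perm A) a ∉ S := fun h' => hfix ((π : Perm A).injective (hπS _ h'))
    exact ⟨⟨swap a _, Subgroup.subset_closure ⟨a, ha, _, hπa, Ne.symm hfix, rfl⟩⟩,
      swap_apply_left _ _⟩
  obtain ⟨π', hπ', he⟩ := Subgroup.mem_map.1 (hle hmem)
  rwa [show π = π' from Subtype.ext he.symm]

end Swap

/-- For `a, b ∉ S₁ ∩ S₂` and a fresh atom `c ∉ S₁ ∪ S₂`, each of `(a c)` and `(c b)` fixes `x`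
by one of the two supports, and `(a b)` lies in the group they generate. -/
theorem supports_inter [Infinite A] {S₁ S₂ : Set A} {x : Y} (hS₁ : S₁.Finite) (hS₂ : S₂.Finite)
    (h₁ : Supports (finPerm A) S₁ x) (h₂ : Supports (finPerm A) S₂ x) :
    Supports (finPerm A) (S₁ ∩ S₂) x := by
  classical
  refine supports_of_forall_swap_mem fun a ha b hb => ?_
  obtain ⟨c, hc⟩ := (hS₁.union hS₂).infinite_compl.nonempty
  rw [Set.mem_compl_iff, Set.mem_union, not_or] at hc
  have swap_mem : ∀ d ∉ S₁ ∩ S₂, swap d c ∈ permStabilizer x := fun d hd => by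
    by_cases hd₁ : d ∈ S₁
    · exact swap_mem_permStabilizer h₂ (fun hd₂ => hd ⟨hd₁, hd₂⟩) hc.2
    · exact swap_mem_permStabilizer h₁ hd₁ hc.1
  exact SubmonoidClass.swap_mem_trans _ (swap_mem a ha) (swap_comm b c ▸ swap_mem b hb)

theorem exists_least_support [Infinite A] {x : Y} (hx : FinitelySupported A x) :
    ∃ M : Set A, M.Finite ∧ Supports (finPerm A) M x ∧
      ∀ T : Set A, T.Finite → Supports (finPerm A) T x → M ⊆ T := by
  set K : Set ℕ := {k | ∃ S : Set A, S.Finite ∧ Supports (finPerm A) S x ∧ S.ncard = k}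
  obtain ⟨S, hSf, hS⟩ := hx
  obtain ⟨M, hMf, hM, hMcard⟩ : sInf K ∈ K := Nat.sInf_mem ⟨_, S, hSf, hS, rfl⟩
  refine ⟨M, hMf, hM, fun T hTf hT => Set.inter_eq_left.1 ?_⟩
  refine Set.eq_of_subset_of_ncard_le Set.inter_subset_left ?_ hMf
  exact hMcard ▸ Nat.sInf_le ⟨_, hMf.inter_of_left T, supports_inter hMf hTf hM hT, rfl⟩

theorem supp_subset {x : Y} {T : Set A} (hT : T.Finite) (h : Supports (finPerm A) T x) :
    supp A x ⊆ T :=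
  Set.sInter_subset_of_mem ⟨hT, h⟩

theorem _root_.FinitelySupported.supp_finite_and_supports [Infinite A] {x : Y}
    (hx : FinitelySupported A x) : (supp A x).Finite ∧ Supports (finPerm A) (supp A x) x := by
  obtain ⟨M, hMf, hM, hleast⟩ := exists_least_support hx
  have hsupp : supp A x = M :=
    (supp_subset hMf hM).antisymm (Set.subset_sInter fun T hT => hleast T hT.1 hT.2)
  exact hsupp ▸ ⟨hMf, hM⟩

theorem supp_smul [Infinite A] {x : Y} (hx : FinitelySupported A x) (π : finPerm A) :
    supp A (π • x) = π • supp A x := by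
  obtain ⟨hf, hs⟩ := hx.supp_finite_and_supports
  have hπs : Supports (finPerm A) (π • supp A x) (π • x) := (supports_smul_iff π).2 hs
  obtain ⟨hf', hs'⟩ := FinitelySupported.supp_finite_and_supports ⟨_, hf.smul_set, hπs⟩
  refine (supp_subset hf.smul_set hπs).antisymm ?_
  rw [Set.smul_set_subset_iff_subset_inv_smul_set]
  refine supp_subset hf'.smul_set ?_
  simpa only [inv_smul_smul] using (supports_smul_iff π⁻¹).2 hs'

theorem injOn_ofSwap_smul [Infinite A] [DecidableEq A] {x : Y} (hx : FinitelySupported A x)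
    {a : A} (ha : a ∈ supp A x) :
    Set.InjOn (fun c => ofSwap a c • x) (insert a (supp A x))ᶜ := by
  intro c hc c' _ he
  simp only [Set.mem_compl_iff, Set.mem_insert_iff, not_or] at hc
  by_contra hne
  have hcmem : c ∈ supp A (ofSwap a c' • x) := by
    rw [← show ofSwap a c • x = ofSwap a c' • x from he, supp_smul hx, Set.mem_smul_set]
    exact ⟨a, ha, swap_apply_left a c⟩
  rw [supp_smul hx, Set.mem_smul_set_iff_inv_smul_mem] at hcmem
  have hfix : (ofSwap a c')⁻¹ • c = c := by
    show (swap a c').symm c = c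
    rw [symm_swap, swap_apply_of_ne_of_ne hc.1 hne]
  exact hc.2 (hfix ▸ hcmem)

theorem supports_of_finite_orbit [Infinite A] {S : Set A} (hS : S.Finite) {x : Y}
    (hx : FinitelySupported A x) (horb : (orbit (fixingSubgroup (finPerm A) S) x).Finite) :
    Supports (finPerm A) S x := by
  classical
  obtain ⟨hf, hs⟩ := hx.supp_finite_and_supports
  refine hs.mono fun a ha => ?_
  by_contra haS
  set s := (insert a (supp A x) ∪ S)ᶜ
  have hinj : Set.InjOn (fun c => ofSwap a c • x) s :=
    (injOn_ofSwap_smul hx ha).mono (Set.compl_subset_compl.2 Set.subset_union_left)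
  have himg : (fun c => ofSwap a c • x) '' s ⊆ orbit (fixingSubgroup (finPerm A) S) x := by
    rintro _ ⟨c, hc, rfl⟩
    simp only [s, Set.mem_compl_iff, Set.mem_union, not_or] at hc
    exact ⟨⟨ofSwap a c, (mem_fixingSubgroup_iff _).2 fun _ => ofSwap_smul_of_notMem haS hc.2⟩, rfl⟩
  exact (((hf.insert a).union hS).infinite_compl.image hinj) (horb.subset himg)

theorem supports_of_mem_of_finite [Infinite A] {S : Set A} (hS : S.Finite) {Z : Set Y}
    (hZ : Z.Finite) (hSZ : Supports (finPerm A) S Z) {x : Y} (hxZ : x ∈ Z)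
    (hx : FinitelySupported A x) : Supports (finPerm A) S x := by
  refine supports_of_finite_orbit hS hx (hZ.subset ?_)
  rintro _ ⟨⟨π, hπ⟩, rfl⟩
  show π • x ∈ Z
  rw [← hSZ π fun a ha => (mem_fixingSubgroup_iff _).1 hπ a ha]
  exact Set.smul_mem_smul_set hxZ

end finPerm

theorem stmt3_general {A Y : Type*} [Infinite A] [MulAction (finPerm A) Y]
    (hinv : ∀ y : Y, FinitelySupported A y) (X : Set Y)
    (h : NoInfUS A X) :
    NoInfUS A (usPowerset A X) := by
  rintro W hWX ⟨S, hS, hSW⟩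
  have hfin : ∀ Z ∈ W, Z.Finite := fun Z hZ => h Z (hWX hZ).1 (hWX hZ).2
  have hU : UniformlySupported A (⋃₀ W) := ⟨S, hS, fun x ⟨Z, hZW, hxZ⟩ =>
    finPerm.supports_of_mem_of_finite hS (hfin Z hZW) (hSW Z hZW) hxZ (hinv x)⟩
  have hUfin : (⋃₀ W).Finite := h _ (Set.sUnion_subset fun Z hZ => (hWX hZ).1) hU
  exact hUfin.finite_subsets.subset fun Z hZ => Set.subset_sUnion_of_mem hZ

/-- if a finitely supported subset `X` of an invariant set `Y` contains no
infinite uniformly supported subset, then neither does its uniform powerset `℘_us(X)`. -/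
theorem stmt3 {A Y : Type*} [Infinite A] [MulAction (finPerm A) Y]
    (hinv : ∀ y : Y, FinitelySupported A y) (X : Set Y)
    (hX : FinitelySupported A X) (h : NoInfUS A X) :
    NoInfUS A (usPowerset A X) :=
  stmt3_general hinv X h
end

section
/- Let X be a finitely supported subset of an invariant set such that X contains no infinite uniformly supported subset. Then the finite powerset ℘_fin(X) of X contains no infinite uniformly supported subset. -/
open Pointwise

/-!
The union `U` of a family of finite subsets of `X` all supported by one finite set `S` is
again supported by `S`: an element `y ∈ U` lies in a finite member `F` of the family, so its
orbit under the permutations fixing `S` stays inside `F` and is finite; and a finitely supported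
element with finite `Fix(S)`-orbit is supported by `S`. Hence `U` is finite, and the family lies in
its finite powerset.

For the latter fact, atoms `a ∉ S` are removed from a finite support `T` one at a time. Among the
infinitely many fresh atoms `b`, the elements `(a b) • x` lie in the finite orbit, so by
pigeonhole one of these transpositions fixes `x`; conjugating by transpositions of fresh atoms,
all of them do, and then `T \ {a}` already supports `x`.
-/

namespace finPerm

variable {A : Type*} [DecidableEq A]

noncomputable def swap (a b : A) : finPerm A :=
  ⟨Equiv.swap a b, ((Set.finite_singleton b).insert a).subset fun c hc => by
    by_contra hab
    simp only [Set.mem_insert_iff, Set.mem_singleton_iff, not_or] at hab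
    exact hc (Equiv.swap_apply_of_ne_of_ne hab.1 hab.2)⟩

@[simp]
lemma coe_swap (a b : A) : (swap a b : Equiv.Perm A) = Equiv.swap a b := rfl

lemma swap_smul (a b c : A) : swap a b • c = Equiv.swap a b c := rfl

lemma swap_mul_self (a b : A) : swap a b * swap a b = 1 :=
  Subtype.ext <| by simp

lemma swap_mul_swap_mul_swap {a b c : A} (hab : a ≠ b) (hac : a ≠ c) :
    swap b c * swap a b * swap b c = swap a c := by
  apply Subtype.ext
  simpa [Equiv.swap_comm c a] using Equiv.swap_mul_swap_mul_swap hab hac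

lemma swap_mul_swap_eq_swap_mul_swap {a b b' : A} (hab' : a ≠ b') (hbb' : b ≠ b') :
    swap a b' * swap a b = swap a b * swap b b' := by
  apply Subtype.ext
  simpa [Equiv.swap_apply_of_ne_of_ne hab'.symm hbb'.symm] using
    Equiv.swap_mul_eq_mul_swap (Equiv.swap a b) a b'

end finPerm

open MulAction finPerm

lemma orbit_fixingSubgroup_subset {G α β : Type*} [Group G] [MulAction G α] [MulAction G β]
    {S : Set α} {F : Set β} (hF : Supports G S F) {y : β} (hy : y ∈ F) :
    orbit (fixingSubgroup G S) y ⊆ F := by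
  rintro _ ⟨⟨g, hg⟩, rfl⟩
  rw [← hF g ((mem_fixingSubgroup_iff G).mp hg)]
  exact Set.smul_mem_smul_set hy

section Supports

variable {A Y : Type*} [MulAction (finPerm A) Y] {S T : Set A} {x : Y}

lemma swap_smul_eq_self_of_supports [DecidableEq A] (hx : Supports (finPerm A) T x) {b c : A}
    (hb : b ∉ T) (hc : c ∉ T) : swap b c • x = x :=
  hx _ fun t ht => by
    rw [swap_smul, Equiv.swap_apply_of_ne_of_ne (ne_of_mem_of_not_mem ht hb)
      (ne_of_mem_of_not_mem ht hc)]

lemma swap_smul_eq_self_of_swap_smul_eq_self [DecidableEq A] (hx : Supports (finPerm A) T x)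
    {a b c : A} (hab : a ≠ b) (hac : a ≠ c) (hb : b ∉ T) (hc : c ∉ T) (h : swap a b • x = x) :
    swap a c • x = x := by
  obtain rfl | hbc := eq_or_ne b c
  · exact h
  have hbcx := swap_smul_eq_self_of_supports hx hb hc
  rw [← swap_mul_swap_mul_swap hab hac, mul_smul, mul_smul, hbcx, h, hbcx]

/-- `(a b') (a b) = (a b) (b b')`, and `(b b')` fixes `x`. -/
lemma swap_smul_eq_self_of_swap_smul_eq [DecidableEq A] (hx : Supports (finPerm A) T x)
    {a b b' : A} (hab' : a ≠ b') (hbb' : b ≠ b') (hb : b ∉ T) (hb' : b' ∉ T)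
    (h : swap a b • x = swap a b' • x) : swap a b • x = x := by
  have hbb'x := swap_smul_eq_self_of_supports hx hb hb'
  calc swap a b • x = swap a b • swap b b' • x := by rw [hbb'x]
    _ = swap a b' • swap a b' • x := by
      rw [← mul_smul, ← swap_mul_swap_eq_swap_mul_swap hab' hbb', mul_smul, h]
    _ = x := by rw [← mul_smul, swap_mul_self, one_smul]

lemma MulAction.Supports.of_insert_of_swap_smul_eq_self [Infinite A] [DecidableEq A] {a : A}
    (hT : T.Finite) (hx : Supports (finPerm A) (insert a T) x)
    (hswap : ∀ c ∉ insert a T, swap a c • x = x) : Supports (finPerm A) T x := by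
  intro π hπ
  obtain ⟨c, hc⟩ := ((hT.insert a).union π.2).infinite_compl.nonempty
  simp only [Set.mem_compl_iff, Set.mem_union, not_or, Set.mem_ofPred_eq, not_not] at hc
  obtain ⟨hcT, hπc⟩ := hc
  have hcx := hswap c hcT
  -- conjugating `π` by `(a c)` turns it into a permutation fixing `a` as well
  have hconj : (swap a c * π * swap a c) • x = x := by
    refine hx _ fun t ht => ?_
    show Equiv.swap a c ((π : Equiv.Perm A) (Equiv.swap a c t)) = t
    rcases eq_or_ne t a with rfl | hta
    · rw [Equiv.swap_apply_left, hπc, Equiv.swap_apply_right]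
    · have htc : t ≠ c := ne_of_mem_of_not_mem ht hcT
      rw [Equiv.swap_apply_of_ne_of_ne hta htc, show (π : Equiv.Perm A) t = t from
        hπ ((Set.mem_insert_iff.mp ht).resolve_left hta),
        Equiv.swap_apply_of_ne_of_ne hta htc]
  calc π • x = swap a c • (swap a c * π * swap a c) • swap a c • x := by
        rw [← mul_smul, ← mul_smul, ← mul_assoc, ← mul_assoc, swap_mul_self, one_mul, mul_assoc,
          swap_mul_self, mul_one]
    _ = x := by rw [hcx, hconj, hcx]

lemma exists_swap_smul_eq_self [Infinite A] [DecidableEq A] (hS : S.Finite)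
    (horb : (orbit (fixingSubgroup (finPerm A) S) x).Finite) (hT : T.Finite)
    (hx : Supports (finPerm A) T x) {a : A} (ha : a ∉ S) : ∃ b ∉ T, a ≠ b ∧ swap a b • x = x := by
  have hmaps : Set.MapsTo (fun b => swap a b • x) (insert a (S ∪ T))ᶜ
      (orbit (fixingSubgroup (finPerm A) S) x) := by
    intro b hb
    simp only [Set.mem_compl_iff, Set.mem_insert_iff, Set.mem_union, not_or] at hb
    refine ⟨⟨swap a b, (mem_fixingSubgroup_iff _).mpr fun s hs => ?_⟩, rfl⟩
    rw [swap_smul, Equiv.swap_apply_of_ne_of_ne (ne_of_mem_of_not_mem hs ha)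
      (ne_of_mem_of_not_mem hs hb.2.1)]
  obtain ⟨b, hb, b', hb', hbb', h⟩ :=
    ((hS.union hT).insert a).infinite_compl.exists_ne_map_eq_of_mapsTo hmaps horb
  simp only [Set.mem_compl_iff, Set.mem_insert_iff, Set.mem_union, not_or] at hb hb'
  exact ⟨b, hb.2.2, Ne.symm hb.1,
    swap_smul_eq_self_of_swap_smul_eq hx (Ne.symm hb'.1) hbb' hb.2.2 hb'.2.2 h⟩

theorem supports_of_orbit_fixingSubgroup_finite [Infinite A] (hS : S.Finite)
    (horb : (orbit (fixingSubgroup (finPerm A) S) x).Finite) (hx : FinitelySupported A x) :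
    Supports (finPerm A) S x := by
  classical
  obtain ⟨T, hT, hTx⟩ := hx
  suffices ∀ T : Set A, T.Finite → Supports (finPerm A) (S ∪ T) x → Supports (finPerm A) S x from
    this T hT (hTx.mono Set.subset_union_right)
  intro T hT
  induction T, hT using Set.Finite.induction_on with
  | empty => simp
  | @insert a T _ hT ih =>
    intro hx
    rw [Set.union_insert] at hx
    by_cases haS : a ∈ S
    · exact ih (by rwa [Set.insert_eq_of_mem (Set.mem_union_left T haS)] at hx)
    refine ih (Supports.of_insert_of_swap_smul_eq_self (hS.union hT) hx fun c hc => ?_)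
    obtain ⟨b, hb, hab, hbx⟩ := exists_swap_smul_eq_self hS horb ((hS.union hT).insert a) hx haS
    exact swap_smul_eq_self_of_swap_smul_eq_self hx hab
      (ne_of_mem_of_not_mem (Set.mem_insert a _) hc) hb hc hbx

end Supports

theorem stmt4_general {A Y : Type*} [Infinite A] [MulAction (finPerm A) Y]
    (hinv : ∀ y : Y, FinitelySupported A y) (X : Set Y)
    (h : NoInfUS A X) :
    NoInfUS A (finPowerset X) := by
  rintro W hW ⟨S, hS, hWS⟩
  have hunion : (⋃₀ W).Finite := by
    refine h _ (Set.sUnion_subset fun F hF => (hW hF).1) ⟨S, hS, ?_⟩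
    rintro y ⟨F, hFW, hyF⟩
    exact supports_of_orbit_fixingSubgroup_finite hS
      ((hW hFW).2.subset (orbit_fixingSubgroup_subset (hWS F hFW) hyF)) (hinv y)
  exact hunion.finite_subsets.subset fun F hF => Set.subset_sUnion_of_mem hF

/-- if a finitely supported subset `X` of an invariant set contains no
infinite uniformly supported subset, then neither does its finite powerset `℘_fin(X)`. -/
theorem stmt4 {A Y : Type*} [Infinite A] [MulAction (finPerm A) Y]
    (hinv : ∀ y : Y, FinitelySupported A y) (X : Set Y)
    (hX : FinitelySupported A X) (h : NoInfUS A X) :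
    NoInfUS A (finPowerset X) :=
  stmt4_general hinv X h
end
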